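/- arXiv:2106.04855 — 6 statements merged into one kernel-verified Lean document; each statement's English description precedes it below -/
import Mathlib

section
/- (Hilbert–Burch, converse direction.) Let R be a commutative Noetherian ring, let m ≥ 1, and let A be an (m+1)×m matrix over R. For each row index i, let δ_i be (−1)^i times the determinant of the m×m matrix obtained from A by deleting the i-th row, let I be the ideal of R generated by δ_0, …, δ_m (equivalently, the ideal I_m(A) of maximal minors of A), and let f : R^{m+1} → R be the R-linear map sending the i-th standard basis vector to δ_i. Assume that I contains a regular sequence of length 2 (the hypothesis that I has grade, i.e. codimension, at least 2). Then the complex 0 → R^m → R^{m+1} → R → R/I → 0, with first map given by matrix multiplication by A and second map f, is a free resolution of R/I; explicitly: the R-linear map R^m → R^{m+1}, v ↦ A·v, is injective, its image equals the kernel of f, and the image of f equals I. -/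
set_option linter.unusedSectionVars false
open Matrix Pointwise

section HB
variable {R : Type*} [CommRing R] {m : ℕ} (A : Matrix (Fin (m + 1)) (Fin m) R)

def HBM (c : Fin (m + 1) → R) : Matrix (Fin (m + 1)) (Fin (m + 1)) R :=
  Matrix.of fun i => Fin.snoc (A i) (c i)

lemma HBM_det (δ : Fin (m + 1) → R)
    (hδ : ∀ i : Fin (m + 1), δ i = (-1) ^ (i : ℕ) * (A.submatrix i.succAbove id).det)
    (c : Fin (m + 1) → R) :
    (HBM A c).det = (-1) ^ m * ∑ i, δ i * c i := by
  rw [Matrix.det_succ_column (HBM A c) (Fin.last m), Finset.mul_sum]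
  refine Finset.sum_congr rfl fun i _ => ?_
  have h1 : (HBM A c).submatrix i.succAbove (Fin.last m).succAbove
      = A.submatrix i.succAbove id := by
    ext r s
    simp [HBM, Fin.succAbove_last, Fin.snoc_castSucc]
  rw [h1, hδ]
  have h2 : (HBM A c) i (Fin.last m) = c i := by simp [HBM]
  rw [h2]
  push_cast [Fin.val_last]
  ring

lemma HBM_updateCol (c b : Fin (m + 1) → R) :
    (HBM A c).updateCol (Fin.last m) b = HBM A b := by
  ext i j
  rcases eq_or_ne j (Fin.last m) with rfl | h
  · simp [HBM]
  · obtain ⟨j', rfl⟩ := Fin.exists_castSucc_eq.mpr h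
    simp [HBM, Matrix.updateCol_apply, Fin.castSucc_lt_last, (Fin.castSucc_lt_last j').ne]

lemma HBM_mulVec (c : Fin (m + 1) → R) (u : Fin (m + 1) → R) :
    (HBM A c).mulVec u
      = A.mulVec (fun j => u j.castSucc) + u (Fin.last m) • c := by
  ext i
  simp only [Matrix.mulVec, dotProduct, Pi.add_apply, Pi.smul_apply, smul_eq_mul]
  rw [Fin.sum_univ_castSucc]
  simp [HBM, mul_comm]

/-- key: multiples of minors of elements of the kernel are in the image. -/
lemma HB_key (δ : Fin (m + 1) → R)
    (hδ : ∀ i : Fin (m + 1), δ i = (-1) ^ (i : ℕ) * (A.submatrix i.succAbove id).det)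
    (v : Fin (m + 1) → R) (hv : ∑ i, δ i * v i = 0) (k : Fin (m + 1)) :
    ∃ w : Fin m → R, A.mulVec w = δ k • v := by
  set Mv := HBM A v with hMv
  have hdet : Mv.det = 0 := by rw [HBM_det A δ hδ, hv, mul_zero]
  set u := Matrix.cramer Mv (Pi.single k 1) with hu
  have h1 : Mv.mulVec u = 0 := by
    rw [hu, Matrix.mulVec_cramer, hdet, zero_smul]
  have hlast : u (Fin.last m) = (-1) ^ m * δ k := by
    rw [hu, Matrix.cramer_apply, HBM_updateCol, HBM_det A δ hδ]
    congr 1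
    rw [Finset.sum_eq_single k]
    · simp
    · intro i _ hik; simp [Pi.single_apply, hik]
    · simp
  rw [HBM_mulVec] at h1
  refine ⟨(-1 : R) ^ m • fun j => - u j.castSucc, ?_⟩
  have h2 : A.mulVec (fun j => u j.castSucc) = -(((-1) ^ m * δ k) • v) := by
    rw [← hlast, eq_neg_iff_add_eq_zero]; exact h1
  have hsq : ((-1 : R) ^ m) * ((-1 : R) ^ m) = 1 := by
    rw [← pow_add, ← two_mul, pow_mul, neg_one_sq, one_pow]
  calc A.mulVec ((-1 : R) ^ m • fun j => - u j.castSucc)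
      = (-1 : R) ^ m • A.mulVec (fun j => - u j.castSucc) := by
        rw [Matrix.mulVec_smul]
    _ = (-1 : R) ^ m • -A.mulVec (fun j => u j.castSucc) := by
        congr 1
        rw [← Matrix.mulVec_neg]
        rfl
    _ = δ k • v := by
        rw [h2, neg_neg, smul_smul, ← mul_assoc, hsq, one_mul]

/-- if `A.mulVec x = 0` then every minor kills every entry of `x`. -/
lemma HB_inj_aux (δ : Fin (m + 1) → R)
    (hδ : ∀ i : Fin (m + 1), δ i = (-1) ^ (i : ℕ) * (A.submatrix i.succAbove id).det)
    (x : Fin m → R) (hx : A.mulVec x = 0) (i : Fin (m + 1)) (j : Fin m) :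
    δ i * x j = 0 := by
  set B := A.submatrix i.succAbove id with hB
  have hBx : B.mulVec x = 0 := by
    ext r
    have := congrFun hx (i.succAbove r)
    simpa [hB, Matrix.mulVec, dotProduct] using this
  have h1 : B.det • x = 0 := by
    have := congrArg (B.adjugate.mulVec) hBx
    rwa [Matrix.mulVec_mulVec, Matrix.adjugate_mul, Matrix.smul_mulVec,
      Matrix.one_mulVec, Matrix.mulVec_zero] at this
  have h2 : B.det * x j = 0 := by
    have := congrFun h1 j
    simpa using this
  rw [hδ, mul_assoc, h2, mul_zero]

end HB

/-- Hilbert–Burch theorem, converse direction: let `A` be an `(m+1) × m` matrix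
over a Noetherian commutative ring `R`, let `δ i` be `(-1)^i` times the `m`-minor
of `A` obtained by deleting the `i`-th row, let `I` be the ideal generated by the
`δ i`, and let `f : R^{m+1} → R` be given by `v ↦ ∑ i, δ i * v i`. If `I` contains
a regular sequence of length `2`, then `0 → R^m → R^{m+1} → R → R/I → 0` (with
first map `v ↦ A · v` and second map `f`) is a free resolution of `R/I`:
`A · -` is injective, its image is the kernel of `f`, and the image of `f` is `I`. -/
theorem hilbert_burch_converse {R : Type*} [CommRing R] [IsNoetherianRing R]
    {m : ℕ} (hm : 1 ≤ m) (A : Matrix (Fin (m + 1)) (Fin m) R)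
    (δ : Fin (m + 1) → R)
    (hδ : ∀ i : Fin (m + 1), δ i = (-1) ^ (i : ℕ) * (A.submatrix i.succAbove id).det)
    (I : Ideal R) (hI : I = Ideal.span (Set.range δ))
    (hreg : ∃ a b : R, a ∈ I ∧ b ∈ I ∧ RingTheory.Sequence.IsRegular R [a, b]) :
    Function.Injective (A.mulVec : (Fin m → R) → (Fin (m + 1) → R)) ∧
    (∀ v : Fin (m + 1) → R,
      (∑ i, δ i * v i) = 0 ↔ ∃ w : Fin m → R, A.mulVec w = v) ∧
    (Set.range fun v : Fin (m + 1) → R => ∑ i, δ i * v i) = (I : Set R) := by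
  obtain ⟨a, b, haI, hbI, hab⟩ := hreg
  -- extract regularity facts
  rw [RingTheory.Sequence.isRegular_cons_iff] at hab
  obtain ⟨ha, hab⟩ := hab
  rw [RingTheory.Sequence.isRegular_cons_iff] at hab
  obtain ⟨hb, -⟩ := hab
  have ha_reg : ∀ x : R, a * x = 0 → x = 0 := by
    intro x hx
    exact ha (show a • x = a • (0 : R) by simpa using hx)
  have hsub : (a • ⊤ : Submodule R R) = Ideal.span {a} := by
    rw [← Submodule.ideal_span_singleton_smul, smul_eq_mul, Ideal.mul_top]
  have hb_reg : ∀ x : R, b * x ∈ Ideal.span {a} → x ∈ Ideal.span {a} := by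
    intro x hx
    have h0 : b • (Submodule.Quotient.mk x : QuotSMulTop a R) = b • 0 := by
      rw [smul_zero, ← Submodule.Quotient.mk_smul, Submodule.Quotient.mk_eq_zero,
        hsub]
      exact hx
    have h1 := hb h0
    rw [← hsub]
    rw [← Submodule.Quotient.mk_eq_zero]
    exact h1
  -- annihilator fact
  have hann : ∀ x : R, (∀ i, δ i * x = 0) → ∀ c ∈ I, c * x = 0 := by
    intro x hx c hc
    rw [hI] at hc
    refine Submodule.span_induction ?_ ?_ ?_ ?_ hc
    · rintro _ ⟨i, rfl⟩; exact hx i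
    · simp
    · intro y z _ _ hy hz; rw [add_mul, hy, hz, add_zero]
    · intro r y _ hy; rw [smul_eq_mul, mul_assoc, hy, mul_zero]
  -- injectivity
  have hinj : Function.Injective (A.mulVec : (Fin m → R) → (Fin (m + 1) → R)) := by
    intro x y hxy
    have hz : A.mulVec (x - y) = 0 := by
      rw [Matrix.mulVec_sub, hxy, sub_self]
    funext j
    have h1 : ∀ i, δ i * (x - y) j = 0 := fun i => HB_inj_aux A δ hδ _ hz i j
    have h2 : a * (x - y) j = 0 := hann _ h1 a haI
    have := ha_reg _ h2
    rw [Pi.sub_apply, sub_eq_zero] at this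
    exact this
  refine ⟨hinj, fun v => ⟨fun hv => ?_, fun ⟨w, hw⟩ => ?_⟩, ?_⟩
  · -- hard direction: kernel ⊆ image
    have hkey : ∀ c ∈ I, ∃ w : Fin m → R, A.mulVec w = c • v := by
      intro c hc
      rw [hI] at hc
      refine Submodule.span_induction ?_ ?_ ?_ ?_ hc
      · rintro _ ⟨k, rfl⟩; exact HB_key A δ hδ v hv k
      · exact ⟨0, by simp⟩
      · rintro y z _ _ ⟨wy, hwy⟩ ⟨wz, hwz⟩
        exact ⟨wy + wz, by rw [Matrix.mulVec_add, hwy, hwz, add_smul]⟩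
      · rintro r y _ ⟨wy, hwy⟩
        exact ⟨r • wy, by rw [Matrix.mulVec_smul, hwy, smul_assoc]⟩
    obtain ⟨w₁, hw₁⟩ := hkey a haI
    obtain ⟨w₂, hw₂⟩ := hkey b hbI
    have hx0 : b • w₁ - a • w₂ = 0 := by
      have hz : A.mulVec (b • w₁ - a • w₂) = 0 := by
        rw [Matrix.mulVec_sub, Matrix.mulVec_smul, Matrix.mulVec_smul, hw₁, hw₂,
          smul_smul, smul_smul, mul_comm, sub_self]
      funext j
      have h1 : ∀ i, δ i * (b • w₁ - a • w₂) j = 0 :=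
        fun i => HB_inj_aux A δ hδ _ hz i j
      exact ha_reg _ (hann _ h1 a haI)
    have hmem : ∀ j, w₁ j ∈ Ideal.span {a} := by
      intro j
      refine hb_reg _ ?_
      have h5 := congrFun hx0 j
      simp only [Pi.sub_apply, Pi.smul_apply, smul_eq_mul, Pi.zero_apply,
        sub_eq_zero] at h5
      rw [h5]
      exact Ideal.mem_span_singleton'.mpr ⟨w₂ j, mul_comm _ _⟩
    choose u hu using fun j => Ideal.mem_span_singleton'.mp (hmem j)
    refine ⟨u, ?_⟩
    have huw : a • u = w₁ := by
      funext j
      simpa [mul_comm] using hu j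
    have h3 : a • A.mulVec u = a • v := by
      rw [← Matrix.mulVec_smul, huw, hw₁]
    funext j
    have := congrFun h3 j
    rw [Pi.smul_apply, Pi.smul_apply, smul_eq_mul, smul_eq_mul] at this
    have h4 : a * (A.mulVec u j - v j) = 0 := by rw [mul_sub, this, sub_self]
    have := ha_reg _ h4
    rwa [sub_eq_zero] at this
  · -- easy direction: image ⊆ kernel
    subst hw
    have hcol : ∀ j : Fin m, ∑ i, δ i * A i j = 0 := by
      intro j
      have hdup : (HBM A (fun i => A i j)).det = 0 := by
        refine Matrix.det_zero_of_column_eq (i := j.castSucc) (j := Fin.last m)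
          (Fin.castSucc_lt_last j).ne ?_
        intro k
        simp [HBM]
      have := HBM_det A δ hδ (fun i => A i j)
      rw [hdup] at this
      have hsq : ((-1 : R) ^ m) * ((-1 : R) ^ m) = 1 := by
        rw [← pow_add, ← two_mul, pow_mul, neg_one_sq, one_pow]
      calc ∑ i, δ i * A i j = ((-1:R)^m * (-1:R)^m) * ∑ i, δ i * A i j := by
            rw [hsq, one_mul]
        _ = (-1:R)^m * ((-1:R)^m * ∑ i, δ i * A i j) := by ring
        _ = 0 := by rw [← this, mul_zero]
    calc ∑ i, δ i * (A.mulVec w) i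
        = ∑ i, ∑ j, δ i * A i j * w j := by
          simp [Matrix.mulVec, dotProduct, Finset.mul_sum, mul_assoc]
      _ = ∑ j, (∑ i, δ i * A i j) * w j := by
          rw [Finset.sum_comm]
          simp [Finset.sum_mul]
      _ = 0 := by simp [hcol]
  · -- range f = I
    ext x
    simp only [Set.mem_range, SetLike.mem_coe]
    constructor
    · rintro ⟨v, rfl⟩
      rw [hI]
      exact Ideal.sum_mem _ fun i _ =>
        Ideal.mul_mem_right _ _ (Ideal.subset_span (Set.mem_range_self i))
    · intro hx
      rw [hI] at hx
      have hx' : x ∈ Submodule.span R (Set.range δ) := hx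
      obtain ⟨c, hc⟩ := (Submodule.mem_span_range_iff_exists_fun R).mp hx'
      exact ⟨c, by rw [← hc]; exact Finset.sum_congr rfl fun i _ => mul_comm _ _⟩
end

section
/- Let R be a commutative ring and A an m×n matrix over R. For every pair of invertible matrices P (of size m×m over R) and Q (of size n×n over R) and every natural number t, the ideal of t-minors of P·A·Q⁻¹ equals the ideal of t-minors of A: I_t(P·A·Q⁻¹) = I_t(A). -/
/-- The ideal of `t`-minors of a matrix `A`, generated by the determinants of
`t × t` submatrices selected by strictly monotone choices of rows and columns. -/
def minorsIdeal {R : Type*} [CommRing R] {m n : ℕ}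
    (A : Matrix (Fin m) (Fin n) R) (t : ℕ) : Ideal R :=
  Ideal.span {x | ∃ (i : Fin t → Fin m) (j : Fin t → Fin n),
    StrictMono i ∧ StrictMono j ∧ x = (A.submatrix i j).det}

open Matrix in
private lemma det_submatrix_mem {R : Type*} [CommRing R] {m n t : ℕ}
    (A : Matrix (Fin m) (Fin n) R) (f : Fin t → Fin m) {j : Fin t → Fin n}
    (hj : StrictMono j) : (A.submatrix f j).det ∈ minorsIdeal A t := by
  by_cases hf : Function.Injective f
  · set σ := Tuple.sort f with hσ
    have hg : StrictMono (f ∘ σ) :=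
      (Tuple.monotone_sort f).strictMono_of_injective (hf.comp σ.injective)
    have hdet : (A.submatrix f j).det
        = (Equiv.Perm.sign σ⁻¹ : ℤ) * (A.submatrix (f ∘ σ) j).det := by
      have h1 : A.submatrix f j
          = (A.submatrix (f ∘ σ) j).submatrix (σ⁻¹ : Equiv.Perm (Fin t)) id := by
        ext k s; simp [Matrix.submatrix]
      rw [h1, Matrix.det_permute]
    rw [hdet]
    exact Ideal.mul_mem_left _ _ (Ideal.subset_span ⟨f ∘ σ, j, hg, hj, rfl⟩)
  · simp only [Function.Injective, not_forall] at hf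
    obtain ⟨a, b, hab, hne⟩ := hf
    have : (A.submatrix f j).det = 0 :=
      Matrix.det_zero_of_row_eq hne (by ext s; simp [Matrix.submatrix, hab])
    rw [this]; exact zero_mem _

private lemma minorsIdeal_mul_left_le' {R : Type*} [CommRing R] {m n : ℕ}
    (P : Matrix (Fin m) (Fin m) R) (A : Matrix (Fin m) (Fin n) R) (t : ℕ) :
    minorsIdeal (P * A) t ≤ minorsIdeal A t := by
  rw [minorsIdeal, Ideal.span_le]
  rintro x ⟨i, j, hi, hj, rfl⟩
  have h1 : ((P * A).submatrix i j)
      = Matrix.of fun k => ∑ l : Fin m, P (i k) l • (fun s => A l (j s)) := by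
    ext k s
    simp [Matrix.mul_apply, Finset.sum_apply]
  have expand : ((P * A).submatrix i j).det
      = ∑ f : Fin t → Fin m, (∏ k, P (i k) (f k)) * (A.submatrix f j).det := by
    calc ((P * A).submatrix i j).det
        = (Matrix.detRowAlternating (R := R) (n := Fin t)).toMultilinearMap
            (fun k => ∑ l : Fin m, P (i k) l • (fun s => A l (j s))) := by
          rw [h1]; rfl
      _ = ∑ f : Fin t → Fin m,
            (Matrix.detRowAlternating (R := R) (n := Fin t)).toMultilinearMap
              (fun k => P (i k) (f k) • (fun s => A (f k) (j s))) :=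
          MultilinearMap.map_sum _ _
      _ = ∑ f : Fin t → Fin m, (∏ k, P (i k) (f k)) * (A.submatrix f j).det := by
          refine Finset.sum_congr rfl fun f _ => ?_
          rw [MultilinearMap.map_smul_univ, smul_eq_mul]
          rfl
  rw [SetLike.mem_coe, expand]
  exact Ideal.sum_mem _ fun f _ =>
    Ideal.mul_mem_left _ _ (det_submatrix_mem A f hj)

open Matrix in
private lemma minorsIdeal_transpose {R : Type*} [CommRing R] {m n : ℕ}
    (A : Matrix (Fin m) (Fin n) R) (t : ℕ) :
    minorsIdeal Aᵀ t = minorsIdeal A t := by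
  unfold minorsIdeal
  congr 1
  ext x
  constructor
  · rintro ⟨i, j, hi, hj, rfl⟩
    exact ⟨j, i, hj, hi, by rw [← Matrix.transpose_submatrix, Matrix.det_transpose]⟩
  · rintro ⟨i, j, hi, hj, rfl⟩
    exact ⟨j, i, hj, hi, by rw [← Matrix.transpose_submatrix, Matrix.det_transpose]⟩

open Matrix in
private lemma minorsIdeal_mul_right_le' {R : Type*} [CommRing R] {m n : ℕ}
    (A : Matrix (Fin m) (Fin n) R) (Q : Matrix (Fin n) (Fin n) R) (t : ℕ) :
    minorsIdeal (A * Q) t ≤ minorsIdeal A t := by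
  rw [← minorsIdeal_transpose (A * Q), Matrix.transpose_mul, ← minorsIdeal_transpose A]
  exact minorsIdeal_mul_left_le' Qᵀ Aᵀ t

private lemma minorsIdeal_mul_le {R : Type*} [CommRing R] {m n : ℕ}
    (A : Matrix (Fin m) (Fin n) R)
    (P : Matrix (Fin m) (Fin m) R) (Q : Matrix (Fin n) (Fin n) R) (t : ℕ) :
    minorsIdeal (P * A * Q) t ≤ minorsIdeal A t :=
  le_trans (minorsIdeal_mul_right_le' (P * A) Q t) (minorsIdeal_mul_left_le' P A t)

/-- Invariance of the determinantal ideals under left and right multiplication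
by invertible matrices: `I_t(P · A · Q⁻¹) = I_t(A)`. -/
theorem minorsIdeal_mul_left_right {R : Type*} [CommRing R] {m n : ℕ}
    (A : Matrix (Fin m) (Fin n) R)
    (P : Matrix (Fin m) (Fin m) R) (Q : Matrix (Fin n) (Fin n) R)
    (hP : IsUnit P) (hQ : IsUnit Q) (t : ℕ) :
    minorsIdeal (P * A * Q⁻¹) t = minorsIdeal A t := by
  refine le_antisymm (minorsIdeal_mul_le A P Q⁻¹ t) ?_
  have hPd : IsUnit P.det := (Matrix.isUnit_iff_isUnit_det P).mp hP
  have hQd : IsUnit Q.det := (Matrix.isUnit_iff_isUnit_det Q).mp hQ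
  have key : P⁻¹ * (P * A * Q⁻¹) * Q = A := by
    rw [← Matrix.mul_assoc, ← Matrix.mul_assoc, Matrix.nonsing_inv_mul P hPd,
      Matrix.one_mul, Matrix.mul_assoc, Matrix.nonsing_inv_mul Q hQd, Matrix.mul_one]
  calc minorsIdeal A t = minorsIdeal (P⁻¹ * (P * A * Q⁻¹) * Q) t := by rw [key]
    _ ≤ minorsIdeal (P * A * Q⁻¹) t := minorsIdeal_mul_le _ _ _ t
end

section
/- (Multiplicativity of compound matrices / Cauchy–Binet for minors.) Let R be a commutative ring, A an m×n matrix and B an n×p matrix over R, and t a natural number. For all strictly monotone maps i : Fin t → Fin m and j : Fin t → Fin p, the t-minor of the product A·B with rows i and columns j equals the sum, over all strictly monotone maps k : Fin t → Fin n, of the product of the t-minor of A with rows i and columns k and the t-minor of B with rows k and columns j: det((A·B).submatrix i j) = Σ_k det(A.submatrix i k)·det(B.submatrix k j). Consequently, the ideal of t-minors of A·B is contained both in the ideal of t-minors of A and in the ideal of t-minors of B: I_t(A·B) ⊆ I_t(A) ⊓ I_t(B). -/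
open scoped Classical

/-- Factor an injective map out of `Fin t` as a strictly monotone map composed
with a permutation. -/
lemma exists_strictMono_comp_perm {t n : ℕ} (r : Fin t → Fin n) (hr : Function.Injective r) :
    ∃ (k : Fin t → Fin n) (τ : Equiv.Perm (Fin t)), StrictMono k ∧ k ∘ τ = r := by
  set s : Finset (Fin n) := Finset.univ.image r with hs_def
  have hs : s.card = t := by
    rw [hs_def, Finset.card_image_of_injective _ hr, Finset.card_univ, Fintype.card_fin]
  have hmem : ∀ x, r x ∈ s := fun x => Finset.mem_image_of_mem r (Finset.mem_univ x)
  set f : Fin t → Fin t := fun x => (s.orderIsoOfFin hs).symm ⟨r x, hmem x⟩ with hf_def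
  have hf : Function.Injective f := by
    intro x y hxy
    have := congrArg (s.orderIsoOfFin hs) hxy
    simp only [hf_def, Equiv.apply_symm_apply, OrderIso.apply_symm_apply] at this
    exact hr (congrArg Subtype.val this)
  refine ⟨s.orderEmbOfFin hs, Equiv.ofBijective f (Finite.injective_iff_bijective.mp hf),
    (s.orderEmbOfFin hs).strictMono, ?_⟩
  funext x
  show s.orderEmbOfFin hs (f x) = r x
  rw [← Finset.coe_orderIsoOfFin_apply, hf_def, OrderIso.apply_symm_apply]

lemma strictMono_comp_perm_inj {t n : ℕ} {k k' : Fin t → Fin n}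
    (hk : StrictMono k) (hk' : StrictMono k') (τ τ' : Equiv.Perm (Fin t))
    (h : k ∘ τ = k' ∘ τ') : k = k' ∧ τ = τ' := by
  have hrange : Set.range k = Set.range k' := by
    rw [← τ.surjective.range_comp k, ← τ'.surjective.range_comp k', h]
  have hkk' : k = k' := (@StrictMono.range_inj (Fin t) (Fin n)
    (inferInstanceAs (LinearOrder (Fin t))) (inferInstanceAs (Preorder (Fin n)))
    (inferInstanceAs (WellFoundedLT (Fin t))) k k' hk hk').mp hrange
  subst hkk'
  refine ⟨rfl, Equiv.ext fun x => hk.injective ?_⟩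
  exact congrFun h x

lemma det_mul_submatrix_expand {R : Type*} [CommRing R] {m n p t : ℕ}
    (A : Matrix (Fin m) (Fin n) R) (B : Matrix (Fin n) (Fin p) R)
    (i : Fin t → Fin m) (j : Fin t → Fin p) :
    ((A * B).submatrix i j).det =
      ∑ r : Fin t → Fin n, (∏ x, A (i x) (r x)) * (B.submatrix r j).det := by
  have h : ((A * B).submatrix i j) =
      Matrix.of fun x => ∑ k : Fin n, A (i x) k • (B.submatrix id j) k := by
    ext x y
    simp [Matrix.mul_apply, Finset.sum_apply]
  rw [h]
  have := (Matrix.detRowAlternating (R := R) (n := Fin t)).toMultilinearMap.map_sum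
    (g := fun x (k : Fin n) => A (i x) k • (B.submatrix id j) k)
  simp only [Matrix.det, AlternatingMap.coe_multilinearMap] at this ⊢
  rw [show (Matrix.of fun x => ∑ k : Fin n, A (i x) k • (B.submatrix id j) k) =
      (fun x => ∑ k : Fin n, A (i x) k • (B.submatrix id j) k) from rfl, this]
  refine Finset.sum_congr rfl fun r _ => ?_
  have h2 := (Matrix.detRowAlternating (R := R) (n := Fin t)).toMultilinearMap.map_smul_univ
    (fun x => A (i x) (r x)) (fun x => (B.submatrix id j) (r x))
  simp only [AlternatingMap.coe_multilinearMap] at h2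
  rw [h2]
  simp only [smul_eq_mul]
  rfl

lemma sum_perm_eq_det_mul_det {R : Type*} [CommRing R] {m n p t : ℕ}
    (A : Matrix (Fin m) (Fin n) R) (B : Matrix (Fin n) (Fin p) R)
    (i : Fin t → Fin m) (j : Fin t → Fin p) (k : Fin t → Fin n) :
    ∑ τ : Equiv.Perm (Fin t), (∏ x, A (i x) (k (τ x))) * (B.submatrix (k ∘ τ) j).det =
      (A.submatrix i k).det * (B.submatrix k j).det := by
  have h1 : ∀ τ : Equiv.Perm (Fin t),
      (B.submatrix (k ∘ τ) j).det = (Equiv.Perm.sign τ : ℤ) * (B.submatrix k j).det := by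
    intro τ
    have := Matrix.det_permute τ (B.submatrix k j)
    rw [Matrix.submatrix_submatrix] at this
    simpa using this
  calc ∑ τ : Equiv.Perm (Fin t), (∏ x, A (i x) (k (τ x))) * (B.submatrix (k ∘ τ) j).det
      = (∑ τ : Equiv.Perm (Fin t),
          ((Equiv.Perm.sign τ : ℤ) : R) * ∏ x, A (i x) (k (τ x))) * (B.submatrix k j).det := by
        rw [Finset.sum_mul]
        refine Finset.sum_congr rfl fun τ _ => ?_
        rw [h1 τ]
        ring
    _ = (A.submatrix i k).det * (B.submatrix k j).det := by
        congr 1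
        rw [Matrix.det_apply']
        refine Fintype.sum_equiv (Equiv.inv (Equiv.Perm (Fin t))) _ _ fun τ => ?_
        simp only [Equiv.inv_apply]
        rw [Equiv.Perm.sign_inv]
        congr 1
        have h3 := Equiv.prod_comp τ (fun y => A (i (τ⁻¹ y)) (k y))
        simp only [show ∀ y, τ⁻¹ (τ y) = y from fun y => τ.symm_apply_apply y] at h3
        simp only [Matrix.submatrix_apply]
        exact h3

/-- The Cauchy–Binet identity for minors. -/
lemma det_mul_submatrix_eq_sum {R : Type*} [CommRing R] {m n p t : ℕ}
    (A : Matrix (Fin m) (Fin n) R) (B : Matrix (Fin n) (Fin p) R)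
    (i : Fin t → Fin m) (j : Fin t → Fin p) :
    ((A * B).submatrix i j).det =
      ∑ k : {k : Fin t → Fin n // StrictMono k},
        (A.submatrix i k.1).det * (B.submatrix k.1 j).det := by
  rw [det_mul_submatrix_expand]
  have key : ∑ r : Fin t → Fin n, (∏ x, A (i x) (r x)) * (B.submatrix r j).det =
      ∑ q : {k : Fin t → Fin n // StrictMono k} × Equiv.Perm (Fin t),
        (∏ x, A (i x) (q.1.1 (q.2 x))) * (B.submatrix (q.1.1 ∘ q.2) j).det := by
    refine (Finset.sum_of_injOn (fun q => q.1.1 ∘ q.2) ?_ ?_ ?_ ?_).symm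
    · intro q _ q' _ hqq'
      obtain ⟨h1, h2⟩ := strictMono_comp_perm_inj q.1.2 q'.1.2 q.2 q'.2 hqq'
      exact Prod.ext (Subtype.ext h1) h2
    · intro q _; exact Finset.mem_univ _
    · intro r _ hr
      by_cases hinj : Function.Injective r
      · exfalso
        obtain ⟨k, τ, hk, hkt⟩ := exists_strictMono_comp_perm r hinj
        exact hr ⟨(⟨k, hk⟩, τ), Finset.mem_coe.mpr (Finset.mem_univ _), hkt⟩
      · rw [Function.not_injective_iff] at hinj
        obtain ⟨a, b, hab, hne⟩ := hinj
        have : (B.submatrix r j).det = 0 := by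
          apply Matrix.det_zero_of_row_eq hne
          funext y
          simp [Matrix.submatrix_apply, hab]
        rw [this, mul_zero]
    · intro q _; rfl
  rw [key, Fintype.sum_prod_type]
  exact Finset.sum_congr rfl fun k _ => sum_perm_eq_det_mul_det A B i j k.1

/-- Cauchy–Binet for minors (multiplicativity of compound matrices): each
`t`-minor of `A · B` is the sum over strictly monotone `k : Fin t → Fin n` of the
products of corresponding minors of `A` and `B`; consequently
`I_t(A · B) ⊆ I_t(A) ⊓ I_t(B)`. -/
theorem minors_mul_and_minorsIdeal_mul_le {R : Type*} [CommRing R] {m n p t : ℕ}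
    (A : Matrix (Fin m) (Fin n) R) (B : Matrix (Fin n) (Fin p) R) :
    (∀ (i : Fin t → Fin m) (j : Fin t → Fin p), StrictMono i → StrictMono j →
      ((A * B).submatrix i j).det =
        ∑ k : {k : Fin t → Fin n // StrictMono k},
          (A.submatrix i k.1).det * (B.submatrix k.1 j).det) ∧
    minorsIdeal (A * B) t ≤ minorsIdeal A t ⊓ minorsIdeal B t := by
  refine ⟨fun i j _ _ => det_mul_submatrix_eq_sum A B i j, ?_⟩
  rw [minorsIdeal, Ideal.span_le]
  rintro x ⟨i, j, hi, hj, rfl⟩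
  rw [det_mul_submatrix_eq_sum A B i j]
  constructor
  · refine Ideal.sum_mem _ fun k _ => Ideal.mul_mem_right _ _ ?_
    exact Ideal.subset_span ⟨i, k.1, hi, k.2, rfl⟩
  · refine Ideal.sum_mem _ fun k _ => Ideal.mul_mem_left _ _ ?_
    exact Ideal.subset_span ⟨k.1, j, k.2, hj, rfl⟩
end

section
/- (Tangent space to the rank stratum and surjectivity of the infinitesimal GL×GL-action.) Let K be a field and let V and W be K-vector spaces. Let φ : V → W and ψ : V → W be K-linear maps. Then there exist K-linear endomorphisms L of W and R of V with ψ = L∘φ − φ∘R if and only if ψ maps the kernel of φ into the image of φ, i.e. ψ(ker φ) ⊆ im φ. -/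
/-- Tangent space to the rank stratum and surjectivity of the infinitesimal
`GL × GL`-action: a linear map `ψ : V → W` can be written as `L ∘ φ - φ ∘ R` for
some endomorphisms `L` of `W` and `R` of `V` if and only if `ψ` maps the kernel
of `φ` into the image of `φ`. -/
theorem exists_eq_comp_sub_comp_iff_map_ker_le_range {K V W : Type*} [Field K]
    [AddCommGroup V] [Module K V] [AddCommGroup W] [Module K W]
    (φ ψ : V →ₗ[K] W) :
    (∃ (L : W →ₗ[K] W) (R : V →ₗ[K] V), ψ = L ∘ₗ φ - φ ∘ₗ R) ↔
      Submodule.map ψ (LinearMap.ker φ) ≤ LinearMap.range φ := by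
  constructor
  · rintro ⟨L, R, rfl⟩ y hy
    rw [Submodule.mem_map] at hy
    obtain ⟨x, hx, rfl⟩ := hy
    rw [LinearMap.mem_ker] at hx
    simp only [LinearMap.sub_apply, LinearMap.comp_apply, hx, map_zero, zero_sub]
    exact ⟨-R x, by simp⟩
  · intro h
    obtain ⟨C, hC⟩ := Submodule.exists_isCompl (LinearMap.ker φ)
    obtain ⟨D, hD⟩ := Submodule.exists_isCompl (LinearMap.range φ)
    obtain ⟨σ, hσ⟩ := φ.rangeRestrict.exists_rightInverse_of_surjective
      (LinearMap.range_rangeRestrict φ)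
    set P : V →ₗ[K] V :=
      (LinearMap.ker φ).subtype ∘ₗ (LinearMap.ker φ).linearProjOfIsCompl C hC with hP
    have hPker : ∀ x ∈ LinearMap.ker φ, P x = x := fun x hx => by
      simp [hP, Submodule.linearProjOfIsCompl_apply_left hC ⟨x, hx⟩]
      exact congrArg Subtype.val (Submodule.linearProjOfIsCompl_apply_left hC ⟨x, hx⟩)
    have hPmem : ∀ x, P x ∈ LinearMap.ker φ := fun x => ((LinearMap.ker φ).linearProjOfIsCompl C hC x).2
    have hφσ : ∀ y : LinearMap.range φ, φ (σ y) = (y : W) := fun y => by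
      have := congrFun (congrArg (fun f => f.toFun) hσ) y
      simpa [LinearMap.rangeRestrict, Subtype.ext_iff] using congrArg Subtype.val this
    set π : W →ₗ[K] LinearMap.range φ := (LinearMap.range φ).linearProjOfIsCompl D hD with hπ
    set L : W →ₗ[K] W := ψ ∘ₗ (LinearMap.id - P) ∘ₗ σ ∘ₗ π with hL
    have hψP : ∀ x, ψ (P x) ∈ LinearMap.range φ := fun x =>
      h (Submodule.mem_map_of_mem (hPmem x))
    set R : V →ₗ[K] V := -(σ ∘ₗ LinearMap.codRestrict _ (ψ ∘ₗ P) hψP) with hR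
    refine ⟨L, R, ?_⟩
    ext v
    have hπφ : π (φ v) = ⟨φ v, LinearMap.mem_range_self φ v⟩ :=
      Submodule.linearProjOfIsCompl_apply_left hD ⟨φ v, LinearMap.mem_range_self φ v⟩
    have hu : φ (σ (π (φ v))) = φ v := by rw [hπφ, hφσ]
    have hker : σ (π (φ v)) - v ∈ LinearMap.ker φ := by
      rw [LinearMap.mem_ker, map_sub, hu, sub_self]
    have hPeq : σ (π (φ v)) - P (σ (π (φ v))) = v - P v := by
      have h1 : P (σ (π (φ v)) - v) = σ (π (φ v)) - v := hPker _ hker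
      have h2 : P (σ (π (φ v))) - P v = σ (π (φ v)) - v := by rw [← map_sub, h1]
      abel_nf
      linear_combination (norm := abel) -h2
    have hLφ : L (φ v) = ψ v - ψ (P v) := by
      simp only [hL, LinearMap.comp_apply, LinearMap.sub_apply, LinearMap.id_apply]
      rw [hPeq, map_sub]
    have hφR : φ (R v) = -ψ (P v) := by
      simp only [hR, LinearMap.neg_apply, LinearMap.comp_apply, map_neg]
      rw [hφσ]
      rfl
    simp only [LinearMap.sub_apply, LinearMap.comp_apply, hLφ, hφR]
    abel
end

section
/- (The infinitesimal GL×GL-action gives logarithmic vector fields for the generic determinantal ideals.) Let k be a commutative ring, let S = k[y_{i,j} : 1 ≤ i ≤ m, 1 ≤ j ≤ n] be the polynomial ring in the entries of the generic m×n matrix Y (so Y_{i,j} = y_{i,j}), and let L be an m×m matrix and M an n×n matrix, each with entries in S. Let D : S → S be the unique k-derivation of S with D(y_{i,j}) = (L·Y − Y·M)_{i,j} for all i, j. Then for every natural number s, D maps the ideal of s-minors of Y into itself: D(I_s(Y)) ⊆ I_s(Y); in particular, D applied to every s-minor of Y lies in I_s(Y). -/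
open Finset

theorem derivation_finset_prod {R S ι : Type*} [CommRing R] [CommRing S] [Algebra R S] [DecidableEq ι]
    (D : Derivation R S S) (t : Finset ι) (f : ι → S) :
    D (∏ p ∈ t, f p) = ∑ p ∈ t, (∏ q ∈ t.erase p, f q) * D (f p) := by
  classical
  induction t using Finset.induction_on with
  | empty => simp
  | @insert a t ha ih =>
    rw [Finset.prod_insert ha, D.leibniz, smul_eq_mul, smul_eq_mul, Finset.sum_insert ha, ih,
      Finset.erase_insert ha, Finset.mul_sum, add_comm]
    congr 1
    refine Finset.sum_congr rfl fun p hp => ?_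
    rw [Finset.erase_insert_of_ne (show a ≠ p from fun h => ha (h.symm ▸ hp)),
      Finset.prod_insert (fun h => ha (Finset.mem_of_mem_erase h)), mul_assoc]

theorem derivation_det_updateCol {R S : Type*} [CommRing R] [CommRing S] [Algebra R S]
    {N : Type*} [Fintype N] [DecidableEq N] (D : Derivation R S S) (M : Matrix N N S) :
    D M.det = ∑ a, (M.updateCol a (fun r => D (M r a))).det := by
  rw [Matrix.det_apply, map_sum]
  have key : ∀ σ : Equiv.Perm N, D (Equiv.Perm.sign σ • ∏ i, M (σ i) i)
      = ∑ a, Equiv.Perm.sign σ •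
        ((∏ i ∈ Finset.univ.erase a, M (σ i) i) * D (M (σ a) a)) := by
    intro σ
    rw [Units.smul_def, map_zsmul D, derivation_finset_prod,
      Finset.smul_sum]
    exact Finset.sum_congr rfl fun a _ => by rw [Units.smul_def]
  rw [Finset.sum_congr rfl fun σ _ => key σ, Finset.sum_comm]
  refine Finset.sum_congr rfl fun a _ => ?_
  rw [Matrix.det_apply]
  refine Finset.sum_congr rfl fun σ _ => ?_
  congr 1
  have h : ∀ i, (M.updateCol a (fun r => D (M r a))) (σ i) i
      = Function.update (fun i => M (σ i) i) a (D (M (σ a) a)) i := by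
    intro i
    by_cases hi : i = a
    · subst hi; simp [Matrix.updateCol_apply]
    · simp [Matrix.updateCol_apply, hi, Function.update_of_ne hi]
  rw [Finset.prod_congr rfl fun i _ => h i, Finset.prod_update_of_mem (Finset.mem_univ a),
    Finset.sdiff_singleton_eq_erase, mul_comm]

theorem derivation_det_updateRow {R S : Type*} [CommRing R] [CommRing S] [Algebra R S]
    {N : Type*} [Fintype N] [DecidableEq N] (D : Derivation R S S) (M : Matrix N N S) :
    D M.det = ∑ a, (M.updateRow a (fun c => D (M a c))).det := by
  rw [← Matrix.det_transpose M, derivation_det_updateCol D M.transpose]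
  refine Finset.sum_congr rfl fun a _ => ?_
  rw [Matrix.updateCol_transpose, Matrix.det_transpose]
  rfl

theorem det_updateRow_linc {R ι : Type*} [CommRing R] {N : Type*} [Fintype N] [DecidableEq N]
    (C : Matrix N N R) (a : N) (t : Finset ι) (c : ι → R) (v : ι → N → R) :
    (C.updateRow a (fun b => ∑ p ∈ t, c p * v p b)).det
      = ∑ p ∈ t, c p * (C.updateRow a (v p)).det := by
  classical
  induction t using Finset.induction_on with
  | empty =>
    rw [Finset.sum_empty]
    refine Matrix.det_eq_zero_of_row_eq_zero a fun j => ?_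
    simp
  | @insert q t hq ih =>
    have hf : (fun b => ∑ p ∈ insert q t, c p * v p b)
        = (c q • v q) + fun b => ∑ p ∈ t, c p * v p b := by
      funext b; simp [Finset.sum_insert hq]
    rw [Finset.sum_insert hq, hf,
      Matrix.det_updateRow_add, Matrix.det_updateRow_smul, ih]

theorem det_updateCol_linc {R ι : Type*} [CommRing R] {N : Type*} [Fintype N] [DecidableEq N]
    (C : Matrix N N R) (a : N) (t : Finset ι) (c : ι → R) (v : ι → N → R) :
    (C.updateCol a (fun b => ∑ p ∈ t, c p * v p b)).det
      = ∑ p ∈ t, c p * (C.updateCol a (v p)).det := by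
  classical
  induction t using Finset.induction_on with
  | empty =>
    rw [Finset.sum_empty]
    refine Matrix.det_eq_zero_of_column_eq_zero a fun j => ?_
    simp
  | @insert q t hq ih =>
    have hf : (fun b => ∑ p ∈ insert q t, c p * v p b)
        = (c q • v q) + fun b => ∑ p ∈ t, c p * v p b := by
      funext b; simp [Finset.sum_insert hq]
    rw [Finset.sum_insert hq, hf,
      Matrix.det_updateCol_add, Matrix.det_updateCol_smul, ih]

theorem submatrix_det_mem_minorsIdeal {R : Type*} [CommRing R] {m n : ℕ}
    (A : Matrix (Fin m) (Fin n) R) (t : ℕ) (i : Fin t → Fin m) (j : Fin t → Fin n) :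
    (A.submatrix i j).det ∈ minorsIdeal A t := by
  by_cases hi : Function.Injective i
  · by_cases hj : Function.Injective j
    · set σ := Tuple.sort i with hσ
      set τ := Tuple.sort j with hτ
      have hiσ : StrictMono (i ∘ σ) :=
        (Tuple.monotone_sort i).strictMono_of_injective (hi.comp σ.injective)
      have hjτ : StrictMono (j ∘ τ) :=
        (Tuple.monotone_sort j).strictMono_of_injective (hj.comp τ.injective)
      have hgen : ((A.submatrix (i ∘ σ) (j ∘ τ)).det) ∈ minorsIdeal A t :=
        Ideal.subset_span ⟨i ∘ σ, j ∘ τ, hiσ, hjτ, rfl⟩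
      have heq : A.submatrix i j
          = ((A.submatrix (i ∘ σ) (j ∘ τ)).submatrix (⇑σ⁻¹) id).submatrix id (⇑τ⁻¹) := by
        ext r c
        simp [Matrix.submatrix_apply, Equiv.Perm.inv_def, Equiv.apply_symm_apply]
      rw [heq, Matrix.det_permute', Matrix.det_permute]
      exact Ideal.mul_mem_left _ _ (Ideal.mul_mem_left _ _ hgen)
    · obtain ⟨a, b, hab, hne⟩ : ∃ a b, j a = j b ∧ a ≠ b := by
        simpa [Function.Injective, not_forall] using hj
      have : (A.submatrix i j).det = 0 :=
        Matrix.det_zero_of_column_eq hne fun r => by simp [Matrix.submatrix_apply, hab]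
      rw [this]; exact (minorsIdeal A t).zero_mem
  · obtain ⟨a, b, hab, hne⟩ : ∃ a b, i a = i b ∧ a ≠ b := by
      simpa [Function.Injective, not_forall] using hi
    have : (A.submatrix i j).det = 0 :=
      Matrix.det_zero_of_row_eq hne (funext fun c => by simp [Matrix.submatrix_apply, hab])
    rw [this]; exact (minorsIdeal A t).zero_mem

/-- The infinitesimal `GL × GL`-action gives logarithmic vector fields for the
generic determinantal ideals: let `Y` be the generic `m × n` matrix of variables
over `S = k[y_{i,j}]`, let `L`, `M` be matrices over `S`, and let `D` be the
`k`-derivation of `S` with `D(y_{i,j}) = (L·Y - Y·M)_{i,j}`. Then `D` maps the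
ideal of `s`-minors of `Y` into itself. -/
theorem derivation_mem_minorsIdeal {k : Type*} [CommRing k] {m n : ℕ}
    (L : Matrix (Fin m) (Fin m) (MvPolynomial (Fin m × Fin n) k))
    (M : Matrix (Fin n) (Fin n) (MvPolynomial (Fin m × Fin n) k))
    (Y : Matrix (Fin m) (Fin n) (MvPolynomial (Fin m × Fin n) k))
    (hY : ∀ i j, Y i j = MvPolynomial.X (i, j))
    (D : Derivation k (MvPolynomial (Fin m × Fin n) k)
      (MvPolynomial (Fin m × Fin n) k))
    (hD : D = MvPolynomial.mkDerivation k
      (fun p : Fin m × Fin n => (L * Y - Y * M) p.1 p.2))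
    (s : ℕ) :
    ∀ x ∈ minorsIdeal Y s, D x ∈ minorsIdeal Y s := by
  intro x hx
  set D₁ : Derivation k (MvPolynomial (Fin m × Fin n) k) (MvPolynomial (Fin m × Fin n) k) :=
    MvPolynomial.mkDerivation k (fun p : Fin m × Fin n => (L * Y) p.1 p.2) with hD₁
  set D₂ : Derivation k (MvPolynomial (Fin m × Fin n) k) (MvPolynomial (Fin m × Fin n) k) :=
    MvPolynomial.mkDerivation k (fun p : Fin m × Fin n => (Y * M) p.1 p.2) with hD₂
  have hsplit : ∀ z, D z = D₁ z - D₂ z := by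
    intro z
    have hmap : MvPolynomial.mkDerivation k
        (fun p : Fin m × Fin n => (L * Y - Y * M) p.1 p.2) = D₁ - D₂ := by
      apply MvPolynomial.derivation_ext
      intro p
      simp [MvPolynomial.mkDerivation_X, hD₁, hD₂, Matrix.sub_apply]
    rw [hD, hmap]
    simp
  have key : ∀ (i : Fin s → Fin m) (j : Fin s → Fin n),
      D ((Y.submatrix i j).det) ∈ minorsIdeal Y s := by
    intro i j
    rw [hsplit]
    refine sub_mem ?_ ?_
    · rw [derivation_det_updateRow D₁ (Y.submatrix i j)]
      refine Submodule.sum_mem _ fun a _ => ?_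
      have hrow : (fun b => D₁ (Y.submatrix i j a b))
          = fun b => ∑ p, L (i a) p * Y p (j b) := by
        funext b
        rw [Matrix.submatrix_apply, hY, hD₁, MvPolynomial.mkDerivation_X, Matrix.mul_apply]
      rw [hrow, det_updateRow_linc (Y.submatrix i j) a Finset.univ
        (fun p => L (i a) p) (fun p b => Y p (j b))]
      refine Submodule.sum_mem _ fun p _ => ?_
      refine Ideal.mul_mem_left _ _ ?_
      have hupd : (Y.submatrix i j).updateRow a (fun b => Y p (j b))
          = Y.submatrix (Function.update i a p) j := by
        ext r b
        by_cases hr : r = a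
        · subst hr; simp
        · simp [Matrix.updateRow_ne hr, Function.update_of_ne hr]
      rw [hupd]
      exact submatrix_det_mem_minorsIdeal Y s _ j
    · rw [derivation_det_updateCol D₂ (Y.submatrix i j)]
      refine Submodule.sum_mem _ fun b _ => ?_
      have hcol : (fun r => D₂ (Y.submatrix i j r b))
          = fun r => ∑ q, M q (j b) * Y (i r) q := by
        funext r
        rw [Matrix.submatrix_apply, hY, hD₂, MvPolynomial.mkDerivation_X, Matrix.mul_apply]
        exact Finset.sum_congr rfl fun q _ => mul_comm _ _
      rw [hcol, det_updateCol_linc (Y.submatrix i j) b Finset.univ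
        (fun q => M q (j b)) (fun q r => Y (i r) q)]
      refine Submodule.sum_mem _ fun q _ => ?_
      refine Ideal.mul_mem_left _ _ ?_
      have hupd : (Y.submatrix i j).updateCol b (fun r => Y (i r) q)
          = Y.submatrix i (Function.update j b q) := by
        ext r c
        by_cases hc : c = b
        · subst hc; simp
        · simp [Matrix.updateCol_ne hc, Function.update_of_ne hc]
      rw [hupd]
      exact submatrix_det_mem_minorsIdeal Y s i _
  refine Submodule.span_induction
    (p := fun z _ => D z ∈ minorsIdeal Y s) ?_ ?_ ?_ ?_ hx
  · rintro z ⟨i, j, _, _, rfl⟩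
    exact key i j
  · simpa using (minorsIdeal Y s).zero_mem
  · intro u v hu hv hDu hDv
    rw [map_add]; exact add_mem hDu hDv
  · intro r z hz hDz
    rw [smul_eq_mul, D.leibniz, smul_eq_mul, smul_eq_mul]
    exact add_mem (Ideal.mul_mem_left _ _ hDz) (Ideal.mul_mem_right _ _ hz)
end

section
/- (The normal module of a complete intersection is free.) Let R be a commutative ring and let f₁, …, f_c be a regular sequence in R generating the ideal I. Then the evaluation map Hom_R(I, R/I) → (R/I)^c sending an R-linear map φ : I → R/I to the tuple (φ(f₁), …, φ(f_c)) is a bijective R-linear map; in particular, the normal module Hom_R(I, R/I) is a free R/I-module of rank c with basis dual to the generators f₁, …, f_c. -/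
open RingTheory.Sequence

lemma aux_take_isWeaklyRegular {R : Type*} [CommRing R] {l : List R}
    (h : IsWeaklyRegular R l) (n : ℕ) : IsWeaklyRegular R (l.take n) := by
  constructor
  intro i hi
  have hi' : i < l.length := lt_of_lt_of_le hi ((List.length_take (i := n) (l := l)).trans_le (min_le_right _ _))
  have h1 : (l.take n).take i = l.take i := by
    rw [List.take_take]
    congr 1
    have : i < n := lt_of_lt_of_le hi ((List.length_take (i := n) (l := l)).trans_le (min_le_left _ _))
    omega
  have h2 : (l.take n)[i] = l[i]'hi' := List.getElem_take
  rw [h1, h2]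
  exact h.regular_mod_prev i hi'

lemma aux_key {R : Type*} [CommRing R] :
    ∀ {c : ℕ} (f : Fin c → R), IsWeaklyRegular R (List.ofFn f) →
      ∀ a : Fin c → R, (∑ i, a i * f i) = 0 → ∀ i, a i ∈ Ideal.span (Set.range f) := by
  intro c
  induction c with
  | zero => exact fun f _ a _ i => i.elim0
  | succ c ih =>
    intro f hw a ha
    set I := Ideal.span (Set.range f) with hIdef
    set g : Fin c → R := Fin.init f with hgdef
    have hg_list : List.ofFn g = (List.ofFn f).take c := by
      apply List.ext_getElem
      · simp
      · intro i h1 h2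
        rw [List.getElem_take, List.getElem_ofFn, List.getElem_ofFn]
        rfl
    have hg : IsWeaklyRegular R (List.ofFn g) := by
      rw [hg_list]; exact aux_take_isWeaklyRegular hw c
    set J : Ideal R := Ideal.span (Set.range g) with hJdef
    have hJI : J ≤ I := Ideal.span_mono (by
      rintro x ⟨i, rfl⟩; exact ⟨i.castSucc, rfl⟩)
    have hflast : f (Fin.last c) ∈ I := Ideal.subset_span ⟨Fin.last c, rfl⟩
    -- the regularity of the last element modulo the previous ones
    have hofList : Ideal.ofList ((List.ofFn f).take c) = J := by
      rw [← hg_list, hJdef]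
      unfold Ideal.ofList
      congr 1
      ext x
      simp [List.mem_ofFn, Set.mem_range, eq_comm]
    have hsmultop : (J • ⊤ : Submodule R R) = J := by
      rw [Ideal.smul_eq_mul, Ideal.mul_top]
    have hreg_last : IsSMulRegular (R ⧸ (J • ⊤ : Submodule R R)) (f (Fin.last c)) := by
      have h5 : (List.ofFn f)[c]'(by simp) = f (Fin.last c) := by
        rw [List.getElem_ofFn]
        rfl
      have := hw.regular_mod_prev c (by simp)
      rw [hofList, h5] at this
      exact this
    -- split the sum
    have hsum : (∑ i : Fin c, a i.castSucc * g i) + a (Fin.last c) * f (Fin.last c) = 0 := by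
      rw [← ha, Fin.sum_univ_castSucc]
      rfl
    have hmemJ : a (Fin.last c) * f (Fin.last c) ∈ J := by
      have : a (Fin.last c) * f (Fin.last c) = -(∑ i : Fin c, a i.castSucc * g i) :=
        eq_neg_of_add_eq_zero_right hsum
      rw [this]
      exact neg_mem (Ideal.sum_mem J fun i _ =>
        Ideal.mul_mem_left J _ (Ideal.subset_span ⟨i, rfl⟩))
    have halast : a (Fin.last c) ∈ J := by
      have h0 : f (Fin.last c) • (Submodule.Quotient.mk (a (Fin.last c)) :
          R ⧸ (J • ⊤ : Submodule R R)) = f (Fin.last c) • (0 : R ⧸ (J • ⊤ : Submodule R R)) := by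
        rw [smul_zero, ← Submodule.Quotient.mk_smul, Submodule.Quotient.mk_eq_zero,
          hsmultop, smul_eq_mul, mul_comm]
        exact hmemJ
      have := hreg_last h0
      rw [Submodule.Quotient.mk_eq_zero, hsmultop] at this
      exact this
    obtain ⟨b, hb⟩ := (Submodule.mem_span_range_iff_exists_fun R).mp halast
    have h2 : ∑ i : Fin c, (a i.castSucc + b i * f (Fin.last c)) * g i = 0 := by
      have e1 : ∑ i : Fin c, (a i.castSucc + b i * f (Fin.last c)) * g i =
          (∑ i : Fin c, a i.castSucc * g i) +
            (∑ i : Fin c, b i • g i) * f (Fin.last c) := by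
        rw [Finset.sum_mul, ← Finset.sum_add_distrib]
        exact Finset.sum_congr rfl fun i _ => by simp [smul_eq_mul]; ring
      rw [e1, hb, hsum]
    have hIH := ih g hg _ h2
    intro i
    refine Fin.lastCases ?_ ?_ i
    · exact hJI halast
    · intro j
      have h3 : a j.castSucc = (a j.castSucc + b j * f (Fin.last c)) - b j * f (Fin.last c) := by
        ring
      rw [h3]
      exact sub_mem (hJI (hIH j)) (Ideal.mul_mem_left I _ hflast)


/-- The normal module of a complete intersection is free: if `f 0, …, f (c-1)` is
a regular sequence generating the ideal `I`, then evaluation at the generators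
gives an `R`-linear bijection `Hom_R(I, R/I) ≃ (R/I)^c`; in particular the
normal module is free of rank `c` with basis dual to the `f i`. -/
theorem normal_module_of_regular_sequence_free {R : Type*} [CommRing R]
    {c : ℕ} (f : Fin c → R)
    (hreg : RingTheory.Sequence.IsRegular R (List.ofFn f))
    (I : Ideal R) (hI : I = Ideal.span (Set.range f))
    (hf : ∀ i, f i ∈ I) :
    ∃ E : ((↥I) →ₗ[R] R ⧸ I) →ₗ[R] (Fin c → R ⧸ I),
      (∀ (φ : (↥I) →ₗ[R] R ⧸ I) (i : Fin c), E φ i = φ ⟨f i, hf i⟩) ∧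
      Function.Bijective E := by
  classical
  refine ⟨{ toFun := fun φ i => φ ⟨f i, hf i⟩,
            map_add' := fun φ ψ => rfl,
            map_smul' := fun r φ => rfl }, fun φ i => rfl, ?_, ?_⟩
  · -- injectivity
    intro φ ψ h
    ext x
    obtain ⟨x, hx⟩ := x
    obtain ⟨a, hax⟩ := (Submodule.mem_span_range_iff_exists_fun R).mp (hI ▸ hx)
    have hrep : (⟨x, hx⟩ : I) = ∑ i, a i • (⟨f i, hf i⟩ : I) := by
      apply Subtype.ext
      simp [← hax, smul_eq_mul]
    rw [hrep, map_sum, map_sum]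
    exact Finset.sum_congr rfl fun i _ => by
      rw [map_smul, map_smul, show φ ⟨f i, hf i⟩ = ψ ⟨f i, hf i⟩ from congrFun h i]
  · -- surjectivity
    intro y
    set π₀ : (Fin c → R) →ₗ[R] R := Fintype.linearCombination R f with hπ₀
    set π : (Fin c → R) →ₗ[R] ↥I :=
      LinearMap.codRestrict I π₀ (fun a => by
        rw [hπ₀, Fintype.linearCombination_apply]
        exact Submodule.sum_mem I fun i _ => Submodule.smul_mem I (a i) (hf i)) with hπdef
    have hπ : Function.Surjective π := by
      rintro ⟨x, hx⟩
      obtain ⟨a, ha⟩ := (Submodule.mem_span_range_iff_exists_fun R).mp (hI ▸ hx)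
      exact ⟨a, Subtype.ext (by simpa [hπdef, hπ₀, Fintype.linearCombination_apply] using ha)⟩
    set T : (Fin c → R) →ₗ[R] R ⧸ I := Fintype.linearCombination R y with hT
    have hker : LinearMap.ker π ≤ LinearMap.ker T := by
      intro a ha
      have ha0 : ∑ i, a i * f i = 0 := by
        have := congrArg Subtype.val (LinearMap.mem_ker.mp ha)
        simpa [hπdef, hπ₀, Fintype.linearCombination_apply, smul_eq_mul] using this
      have hm : ∀ i, a i ∈ I := by
        rw [hI]
        exact aux_key f hreg.toIsWeaklyRegular a ha0
      rw [LinearMap.mem_ker, hT, Fintype.linearCombination_apply]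
      apply Finset.sum_eq_zero
      intro i _
      obtain ⟨r, hr⟩ := Submodule.Quotient.mk_surjective I (y i)
      rw [← hr, ← Submodule.Quotient.mk_smul, Submodule.Quotient.mk_eq_zero]
      rw [smul_eq_mul]
      exact Ideal.mul_mem_right r I (hm i)
    set e := LinearMap.quotKerEquivOfSurjective π hπ with he
    refine ⟨(Submodule.liftQ (LinearMap.ker π) T hker) ∘ₗ
      (e.symm : ↥I →ₗ[R] ((Fin c → R) ⧸ LinearMap.ker π)), ?_⟩
    funext i
    show Submodule.liftQ (LinearMap.ker π) T hker (e.symm ⟨f i, hf i⟩) = y i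
    have hsymm : e.symm ⟨f i, hf i⟩ = Submodule.Quotient.mk (Pi.single i 1) := by
      rw [LinearEquiv.symm_apply_eq]
      apply Subtype.ext
      show f i = π₀ (Pi.single i 1)
      rw [hπ₀, Fintype.linearCombination_apply_single, one_smul]
    rw [hsymm, Submodule.liftQ_apply, hT, Fintype.linearCombination_apply_single, one_smul]
end
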